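/- arXiv:1307.0743 — 5 statements merged into one kernel-verified Lean document; each statement's English description precedes it below -/
import Mathlib

section
/- Let q be a rational prime, let K be a number field containing a primitive q-th root of unity, let x, b, c ∈ K and a prime 𝔭_K of K satisfy the hypotheses: 𝔭_K does not divide q; ord_{𝔭_K}(c) = 0 and the image of c in the residue field of 𝔭_K is not a q-th power; ord_{𝔭_K}(x) < 0; ord_{𝔭_K}(b) is not divisible by q; q·ord_{𝔭_K}(x) < (q−1)·ord_{𝔭_K}(b); and let L = K(α, β, γ) with α^q = 1 + x⁻¹, β^q = 1 + (bx^q + b^q)⁻¹, γ^q = 1 + (c + c⁻¹)x⁻¹. Then for every prime 𝔞_L of L that does not divide q and satisfies ord_{𝔞_L}(x) ≥ 0, all three of ord_{𝔞_L}(c), ord_{𝔞_L}(bx^q + b^q), and ord_{𝔞_L}(x) are divisible by q. -/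
/-!
At a prime `𝔞` of `L`, an element `z` with `ord_𝔞 z < 0` satisfies `ord_𝔞 (1 + z) = ord_𝔞 z`,
so an equation `a ^ q = 1 + z` forces `q ∣ ord_𝔞 z`. Since `ord_𝔞 x ≥ 0`, this applies to `α`
with `z = x⁻¹`; to `β` with `z = (bx^q + b^q)⁻¹`, unless `ord_𝔞 b < 0`, in which case
`ord_𝔞 (bx^q + b^q) = q · ord_𝔞 b` outright; and to `γ` with `z = (c + c⁻¹)x⁻¹`, whose order is
`-|ord_𝔞 c| - ord_𝔞 x` when `ord_𝔞 c ≠ 0`.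
-/

open IsDedekindDomain NumberField

open scoped Classical in
/-- The `v`-adic order (additive valuation) of a nonzero element `x` of a number field `K`,
with junk value `0` at `x = 0`. -/
noncomputable def ordv {K : Type*} [Field K] [NumberField K]
    (v : HeightOneSpectrum (𝓞 K)) (x : K) : ℤ :=
  if h : x = 0 then 0
  else - Multiplicative.toAdd (WithZero.unzero ((v.valuation K).ne_zero_iff.mpr h))

/-- `c` (assumed to have `v`-adic order `0`) is a `q`-th power modulo the prime `v`, i.e. the
image of `c` in the residue field of `v` is a `q`-th power. -/
def IsQthPowerResidue {K : Type*} [Field K] [NumberField K] (q : ℕ)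
    (v : HeightOneSpectrum (𝓞 K)) (c : K) : Prop :=
  ∃ z : 𝓞 K, c = (algebraMap (𝓞 K) K z) ^ q ∨ 0 < ordv v (c - (algebraMap (𝓞 K) K z) ^ q)

section Ordv

variable {K : Type*} [Field K] [NumberField K] (v : HeightOneSpectrum (𝓞 K)) {q : ℕ} {a : K}

lemma ordv_eq_neg_log (x : K) : ordv v x = -WithZero.log (v.valuation K x) := by
  by_cases hx : x = 0
  · simp [ordv, hx]
  · rw [ordv, dif_neg hx, WithZero.toAdd_unzero_eq_log]

@[simp]
lemma ordv_zero : ordv v (0 : K) = 0 := by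
  simp [ordv_eq_neg_log]

lemma ne_zero_of_ordv_ne_zero {x : K} (h : ordv v x ≠ 0) : x ≠ 0 := by
  rintro rfl
  exact h (ordv_zero v)

@[simp]
lemma ordv_one : ordv v (1 : K) = 0 := by
  simp [ordv_eq_neg_log]

lemma ordv_mul {x y : K} (hx : x ≠ 0) (hy : y ≠ 0) : ordv v (x * y) = ordv v x + ordv v y := by
  simp only [ordv_eq_neg_log, map_mul]
  rw [WithZero.log_mul (by simpa) (by simpa), neg_add]

lemma ordv_inv (x : K) : ordv v x⁻¹ = -ordv v x := by
  simp only [ordv_eq_neg_log, map_inv₀, WithZero.log_inv]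

lemma ordv_pow (x : K) (n : ℕ) : ordv v (x ^ n) = n * ordv v x := by
  simp only [ordv_eq_neg_log, map_pow, WithZero.log_pow, nsmul_eq_mul, mul_neg]

lemma ordv_lt_ordv_iff {x y : K} (hx : x ≠ 0) (hy : y ≠ 0) :
    ordv v x < ordv v y ↔ v.valuation K y < v.valuation K x := by
  rw [ordv_eq_neg_log, ordv_eq_neg_log, neg_lt_neg_iff,
    WithZero.log_lt_log (by simpa) (by simpa)]

lemma ordv_add_of_lt {x y : K} (hx : x ≠ 0) (h : ordv v x < ordv v y) :
    ordv v (x + y) = ordv v x := by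
  rcases eq_or_ne y 0 with rfl | hy
  · rw [add_zero]
  rw [ordv_eq_neg_log, ordv_eq_neg_log,
    Valuation.map_add_eq_of_lt_left _ ((ordv_lt_ordv_iff v hx hy).mp h)]

lemma ordv_nonneg_iff {x : K} : 0 ≤ ordv v x ↔ v.valuation K x ≤ 1 := by
  rcases eq_or_ne x 0 with rfl | hx
  · simp
  rw [ordv_eq_neg_log, neg_nonneg, ← WithZero.log_one (M := ℤ),
    WithZero.log_le_log (by simpa) one_ne_zero]

lemma ordv_add_nonneg {x y : K} (hx : 0 ≤ ordv v x) (hy : 0 ≤ ordv v y) :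
    0 ≤ ordv v (x + y) := by
  rw [ordv_nonneg_iff] at hx hy ⊢
  exact (Valuation.map_add _ x y).trans (max_le hx hy)

lemma ordv_one_add_of_neg {z : K} (hz : ordv v z < 0) : ordv v (1 + z) = ordv v z := by
  rw [add_comm]
  exact ordv_add_of_lt v (ne_zero_of_ordv_ne_zero v hz.ne) (by simpa)

lemma ordv_add_inv_of_ne_zero {c : K} (hc : ordv v c ≠ 0) :
    ordv v (c + c⁻¹) = -|ordv v c| := by
  have hc0 := ne_zero_of_ordv_ne_zero v hc
  rcases hc.lt_or_gt with hneg | hpos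
  · rw [ordv_add_of_lt v hc0 (by rw [ordv_inv]; omega), abs_of_neg hneg, neg_neg]
  · rw [add_comm, ordv_add_of_lt v (inv_ne_zero hc0) (by rw [ordv_inv]; omega), ordv_inv,
      abs_of_pos hpos]

lemma ordv_mul_pow_add_pow (hq : 2 ≤ q) {b x : K} (hx0 : x ≠ 0)
    (hx : 0 ≤ ordv v x) :
    0 ≤ ordv v (b * x ^ q + b ^ q) ∨ ordv v (b * x ^ q + b ^ q) = q * ordv v b := by
  rcases eq_or_ne b 0 with rfl | hb0
  · simp [zero_pow (by omega : q ≠ 0)]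
  have hxq : x ^ q ≠ 0 := pow_ne_zero q hx0
  rcases le_or_gt 0 (ordv v b) with hb | hb
  · left
    apply ordv_add_nonneg v
    · rw [ordv_mul v hb0 hxq, ordv_pow]
      positivity
    · rw [ordv_pow]
      positivity
  · right
    have hq' : (2 : ℤ) ≤ q := by exact_mod_cast hq
    have hbq : ordv v (b ^ q) < 0 := by
      rw [ordv_pow]
      exact mul_neg_of_pos_of_neg (by omega) hb
    rw [add_comm, ordv_add_of_lt v (ne_zero_of_ordv_ne_zero v hbq.ne) ?_, ordv_pow]
    rw [ordv_mul v hb0 hxq, ordv_pow, ordv_pow]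
    nlinarith

theorem dvd_ordv_of_pow_eq_one_add {z : K} (ha : a ^ q = 1 + z) (hz : ordv v z < 0) :
    (q : ℤ) ∣ ordv v z :=
  ⟨ordv v a, by rw [← ordv_one_add_of_neg v hz, ← ha, ordv_pow]⟩

theorem dvd_ordv_of_pow_eq_one_add_inv {z : K} (ha : a ^ q = 1 + z⁻¹) (hz : 0 ≤ ordv v z) :
    (q : ℤ) ∣ ordv v z := by
  rcases hz.eq_or_lt with h | h
  · rw [← h]
    exact dvd_zero _
  · have := dvd_ordv_of_pow_eq_one_add v ha (by rw [ordv_inv]; omega)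
    rwa [ordv_inv, dvd_neg] at this

theorem dvd_ordv_mul_pow_add_pow_of_pow_eq (hq : 2 ≤ q) {b x : K} (hx0 : x ≠ 0)
    (ha : a ^ q = 1 + (b * x ^ q + b ^ q)⁻¹) (hx : 0 ≤ ordv v x) :
    (q : ℤ) ∣ ordv v (b * x ^ q + b ^ q) := by
  rcases ordv_mul_pow_add_pow v hq hx0 hx with h | h
  · exact dvd_ordv_of_pow_eq_one_add_inv v ha h
  · exact ⟨ordv v b, h⟩

theorem dvd_ordv_of_pow_eq_one_add_add_inv_mul_inv {c x : K} (hx0 : x ≠ 0)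
    (ha : a ^ q = 1 + (c + c⁻¹) * x⁻¹) (hx : 0 ≤ ordv v x) (hqx : (q : ℤ) ∣ ordv v x) :
    (q : ℤ) ∣ ordv v c := by
  rcases eq_or_ne (ordv v c) 0 with hc | hc
  · rw [hc]
    exact dvd_zero _
  have hsum := ordv_add_inv_of_ne_zero v hc
  have hsum0 : c + c⁻¹ ≠ 0 := ne_zero_of_ordv_ne_zero v (by rw [hsum]; simpa)
  have hord : ordv v ((c + c⁻¹) * x⁻¹) = -|ordv v c| - ordv v x := by
    rw [ordv_mul v hsum0 (inv_ne_zero hx0), ordv_inv, hsum, sub_eq_add_neg]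
  have hdvd := dvd_ordv_of_pow_eq_one_add v ha (by rw [hord]; linarith [abs_pos.mpr hc])
  rw [hord] at hdvd
  have := dvd_add hdvd hqx
  rwa [sub_add_cancel, dvd_neg, dvd_abs] at this

end Ordv

theorem orders_divisible_by_q_away_from_poles_of_x_general
    (q : ℕ) (hq : q.Prime)
    (K : Type*) [Field K]
    (x b c : K) (hx : x ≠ 0)
    (L : Type*) [Field L] [NumberField L] [Algebra K L] (α β γ : L)
    (hα : α ^ q = algebraMap K L (1 + x⁻¹))
    (hβ : β ^ q = algebraMap K L (1 + (b * x ^ q + b ^ q)⁻¹))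
    (hγ : γ ^ q = algebraMap K L (1 + (c + c⁻¹) * x⁻¹)) :
    ∀ 𝔞 : HeightOneSpectrum (𝓞 L),
      (q : 𝓞 L) ∉ 𝔞.asIdeal → 0 ≤ ordv 𝔞 (algebraMap K L x) →
        (q : ℤ) ∣ ordv 𝔞 (algebraMap K L c) ∧
        (q : ℤ) ∣ ordv 𝔞 (algebraMap K L (b * x ^ q + b ^ q)) ∧
        (q : ℤ) ∣ ordv 𝔞 (algebraMap K L x) := by
  intro 𝔞 _ hx𝔞
  have hx0 : algebraMap K L x ≠ 0 := (map_ne_zero _).mpr hx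
  simp only [map_add, map_one, map_mul, map_pow, map_inv₀] at hα hβ hγ ⊢
  have hqx := dvd_ordv_of_pow_eq_one_add_inv 𝔞 hα hx𝔞
  exact ⟨dvd_ordv_of_pow_eq_one_add_add_inv_mul_inv 𝔞 hx0 hγ hx𝔞 hqx,
    dvd_ordv_mul_pow_add_pow_of_pow_eq 𝔞 hq.two_le hx0 hβ hx𝔞, hqx⟩

/-- Proposition: with `L = K(α, β, γ)` where `α^q = 1 + x⁻¹`,
`β^q = 1 + (bx^q + b^q)⁻¹`, `γ^q = 1 + (c + c⁻¹)x⁻¹`, and with `x, b, c` and the prime `𝔭`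
of `K` as in the previous proposition, every prime `𝔞` of `L` not dividing `q` at which `x`
is integral satisfies: `ord_𝔞 c`, `ord_𝔞 (bx^q + b^q)` and `ord_𝔞 x` are all divisible
by `q`. -/
theorem orders_divisible_by_q_away_from_poles_of_x
    (q : ℕ) (hq : q.Prime)
    (K : Type*) [Field K] [NumberField K] (hzeta : ∃ ζ : K, IsPrimitiveRoot ζ q)
    (x b c : K) (hx : x ≠ 0) (hb : b ≠ 0) (hc : c ≠ 0) (hbx : b * x ^ q + b ^ q ≠ 0)
    (L : Type*) [Field L] [NumberField L] [Algebra K L] (α β γ : L)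
    (hα : α ^ q = algebraMap K L (1 + x⁻¹))
    (hβ : β ^ q = algebraMap K L (1 + (b * x ^ q + b ^ q)⁻¹))
    (hγ : γ ^ q = algebraMap K L (1 + (c + c⁻¹) * x⁻¹))
    (hgen : IntermediateField.adjoin K ({α, β, γ} : Set L) = ⊤)
    (𝔭 : HeightOneSpectrum (𝓞 K))
    (h1 : (q : 𝓞 K) ∉ 𝔭.asIdeal)
    (h2 : ordv 𝔭 c = 0 ∧ ¬ IsQthPowerResidue q 𝔭 c)
    (h3 : ordv 𝔭 x < 0)
    (h4 : ¬ (q : ℤ) ∣ ordv 𝔭 b)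
    (h5 : (q : ℤ) * ordv 𝔭 x < (q - 1 : ℤ) * ordv 𝔭 b) :
    ∀ 𝔞 : HeightOneSpectrum (𝓞 L),
      (q : 𝓞 L) ∉ 𝔞.asIdeal → 0 ≤ ordv 𝔞 (algebraMap K L x) →
        (q : ℤ) ∣ ordv 𝔞 (algebraMap K L c) ∧
        (q : ℤ) ∣ ordv 𝔞 (algebraMap K L (b * x ^ q + b ^ q)) ∧
        (q : ℤ) ∣ ordv 𝔞 (algebraMap K L x) :=
  orders_divisible_by_q_away_from_poles_of_x_general q hq K x b c hx L α β γ hα hβ hγ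
end

section
/- Let F/U be a cyclic extension of number fields with degree [F : U] divisible by q^m for a rational prime q and integer m ≥ 1, and let N be the unique intermediate field U ⊆ N ⊆ F with [N : U] = q^m. Let 𝔭_F be a prime of F lying above the prime 𝔭_U = 𝔭_F ∩ U of U, unramified over 𝔭_U, and let σ ∈ Gal(F/U) be the Frobenius automorphism of 𝔭_F, i.e. a generator of the decomposition group (the stabilizer of 𝔭_F under the Galois action) of 𝔭_F over U. If σ is not a q-th power in Gal(F/U), then 𝔭_U does not split in N/U, i.e. there is exactly one prime of N lying above 𝔭_U. -/
open IsDedekindDomain NumberField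

/-!
Gal(F/U) is cyclic, hence abelian, so N/U is Galois and restriction Gal(F/U) → Gal(N/U) is
surjective onto a cyclic group of order q^m. Writing σ = g^a for a generator g, σ not being a
q-th power means q ∤ a, so the restriction of σ generates Gal(N/U). Since σ stabilises 𝔭_F, its
restriction stabilises 𝔭_N = 𝔭_F ∩ 𝓞_N, hence all of Gal(N/U) does; as Gal(N/U) acts
transitively on the primes of N above 𝔭_U, 𝔭_N is the only one.
-/

theorem zpowers_map_eq_top_of_not_exists_pow_eq {G H : Type*} [Group G] [Finite G] [IsCyclic G]
    [Group H] {f : G →* H} (hf : Function.Surjective f) {q m : ℕ} (hq : q.Prime)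
    (hH : Nat.card H = q ^ m) {σ : G} (hσ : ¬ ∃ τ : G, τ ^ q = σ) :
    Subgroup.zpowers (f σ) = ⊤ := by
  have : Finite H := Finite.of_surjective f hf
  obtain ⟨g, hg⟩ := IsCyclic.exists_generator (α := G)
  obtain ⟨a, rfl⟩ : ∃ a : ℕ, g ^ a = σ := mem_powers_iff_mem_zpowers.mpr (hg σ)
  have hqa : ¬ q ∣ a := by
    rintro ⟨b, rfl⟩
    exact hσ ⟨g ^ b, by rw [← pow_mul, mul_comm]⟩
  have hfg : orderOf (f g) = q ^ m := by
    rw [← hH]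
    refine orderOf_eq_card_of_forall_mem_zpowers fun y ↦ ?_
    obtain ⟨x, rfl⟩ := hf y
    obtain ⟨k, rfl⟩ := Subgroup.mem_zpowers_iff.mp (hg x)
    exact ⟨k, by rw [map_zpow]⟩
  apply Subgroup.eq_top_of_card_eq
  have hcop : (orderOf (f g)).Coprime a :=
    hfg ▸ ((Nat.Prime.coprime_iff_not_dvd hq).mpr hqa).pow_left m
  rw [Nat.card_zpowers, map_pow, hcop.orderOf_pow, hfg, hH]

open scoped Pointwise in
theorem Ideal.comap_eq_self_iff_mem_stabilizer {A B : Type*} [CommSemiring A] [Semiring B]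
    [Algebra A B] {P : Ideal B} {e : B ≃ₐ[A] B} :
    P.comap e = P ↔ e ∈ MulAction.stabilizer (B ≃ₐ[A] B) P := by
  have : P.comap e = e⁻¹ • P := by
    ext x
    rw [Ideal.mem_comap, Ideal.mem_inv_pointwise_smul_iff, AlgEquiv.smul_def]
  rw [this, ← Subgroup.inv_mem_iff, MulAction.mem_stabilizer_iff]

theorem Ideal.comap_eq_self_of_mem_zpowers {A B : Type*} [CommSemiring A] [Semiring B]
    [Algebra A B] {P : Ideal B} {e f : B ≃ₐ[A] B} (he : P.comap e = P)
    (hf : f ∈ Subgroup.zpowers e) : P.comap f = P :=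
  Ideal.comap_eq_self_iff_mem_stabilizer.mpr <|
    Subgroup.zpowers_le.mpr (Ideal.comap_eq_self_iff_mem_stabilizer.mp he) hf

theorem NumberField.RingOfIntegers.algebraMap_galRestrict_restrictNormal
    {K L M : Type*} [Field K] [Field L] [Field M] [NumberField K] [NumberField L] [NumberField M]
    [Algebra K L] [Algebra L M] [Algebra K M] [IsScalarTower K L M] [Normal K L] [IsGalois K M]
    (τ : M ≃ₐ[K] M) (x : 𝓞 L) :
    algebraMap (𝓞 L) (𝓞 M) (galRestrict (𝓞 K) K L (𝓞 L) (τ.restrictNormal L) x) =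
      galRestrict (𝓞 K) K M (𝓞 M) τ (algebraMap (𝓞 L) (𝓞 M) x) := by
  apply FaithfulSMul.algebraMap_injective (𝓞 M) M
  rw [← IsScalarTower.algebraMap_apply, IsScalarTower.algebraMap_apply (𝓞 L) L M,
    algebraMap_galRestrict_apply, algebraMap_galRestrict_apply,
    ← IsScalarTower.algebraMap_apply, IsScalarTower.algebraMap_apply (𝓞 L) L M]
  exact AlgEquiv.restrictNormal_commutes τ L (algebraMap (𝓞 L) L x)

theorem NumberField.RingOfIntegers.comap_galRestrict_restrictNormal_under
    {K L M : Type*} [Field K] [Field L] [Field M] [NumberField K] [NumberField L] [NumberField M]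
    [Algebra K L] [Algebra L M] [Algebra K M] [IsScalarTower K L M] [Normal K L] [IsGalois K M]
    (τ : M ≃ₐ[K] M) (P : Ideal (𝓞 M)) :
    (P.under (𝓞 L)).comap (galRestrict (𝓞 K) K L (𝓞 L) (τ.restrictNormal L)) =
      (P.comap (galRestrict (𝓞 K) K M (𝓞 M) τ)).under (𝓞 L) := by
  ext x
  simp only [Ideal.under_def, Ideal.mem_comap, algebraMap_galRestrict_restrictNormal]

theorem NumberField.RingOfIntegers.eq_of_under_eq_of_forall_comap_galRestrict_eq
    {K L : Type*} [Field K] [Field L] [NumberField K] [NumberField L] [Algebra K L] [IsGalois K L]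
    {P Q : Ideal (𝓞 L)} [P.IsPrime] [Q.IsPrime]
    (hP : ∀ ρ : L ≃ₐ[K] L, P.comap (galRestrict (𝓞 K) K L (𝓞 L) ρ) = P)
    (hQ : Q.under (𝓞 K) = P.under (𝓞 K)) : Q = P := by
  obtain ⟨ρ, hρ⟩ := Ideal.exists_comap_galRestrict_eq (𝓞 K) K L (𝓞 L) (p := P.under (𝓞 K))
    ⟨‹_›, ⟨rfl⟩⟩ ⟨‹_›, ⟨hQ.symm⟩⟩
  rw [← hρ, hP]

theorem not_split_in_N_of_frobenius_not_qth_power_general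
    (q m : ℕ) (hq : q.Prime)
    (U N F : Type*) [Field U] [Field N] [Field F]
    [NumberField U] [NumberField N] [NumberField F]
    [Algebra U N] [Algebra N F] [Algebra U F] [IsScalarTower U N F]
    [IsGalois U F] [IsCyclic (F ≃ₐ[U] F)]
    (hN : Module.finrank U N = q ^ m)
    (𝔭F : HeightOneSpectrum (𝓞 F))
    (σ : F ≃ₐ[U] F)
    (hσfix : Ideal.comap (galRestrict (𝓞 U) U F (𝓞 F) σ) 𝔭F.asIdeal = 𝔭F.asIdeal)
    (hnotpow : ¬ ∃ τ : F ≃ₐ[U] F, τ ^ q = σ) :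
    ∃! w : HeightOneSpectrum (𝓞 N),
      w.asIdeal.comap (algebraMap (𝓞 U) (𝓞 N)) =
        𝔭F.asIdeal.comap (algebraMap (𝓞 U) (𝓞 F)) := by
  have := IsAbelianGalois.of_isCyclic U F
  have := IsAbelianGalois.tower_bot U N F
  have hgen : Subgroup.zpowers (σ.restrictNormal N) = ⊤ :=
    zpowers_map_eq_top_of_not_exists_pow_eq (f := AlgEquiv.restrictNormalHom N)
      (AlgEquiv.restrictNormalHom_surjective F) hq
      (by rw [IsGalois.card_aut_eq_finrank, hN]) hnotpow
  let 𝔭N := 𝔭F.under (𝓞 N)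
  have h𝔭Nfix (ρ : N ≃ₐ[U] N) :
      𝔭N.asIdeal.comap (galRestrict (𝓞 U) U N (𝓞 N) ρ) = 𝔭N.asIdeal := by
    refine Ideal.comap_eq_self_of_mem_zpowers
      (e := galRestrict (𝓞 U) U N (𝓞 N) (σ.restrictNormal N)) ?_ ?_
    · rw [HeightOneSpectrum.under_asIdeal,
        RingOfIntegers.comap_galRestrict_restrictNormal_under, hσfix]
    · obtain ⟨k, rfl⟩ := Subgroup.mem_zpowers_iff.mp (hgen ▸ Subgroup.mem_top ρ)
      exact Subgroup.mem_zpowers_iff.mpr ⟨k, (map_zpow _ _ _).symm⟩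
  have h𝔭N : 𝔭N.asIdeal.comap (algebraMap (𝓞 U) (𝓞 N)) =
      𝔭F.asIdeal.comap (algebraMap (𝓞 U) (𝓞 F)) := by
    rw [HeightOneSpectrum.under_asIdeal, Ideal.under_def, Ideal.comap_comap,
      ← IsScalarTower.algebraMap_eq]
  exact ⟨𝔭N, h𝔭N, fun w hw ↦ HeightOneSpectrum.ext <|
    RingOfIntegers.eq_of_under_eq_of_forall_comap_galRestrict_eq h𝔭Nfix (hw.trans h𝔭N.symm)⟩

/-- Lemma: let `F/U` be a cyclic extension of number fields with `q^m ∣ [F : U]`, and let `N`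
be the (unique) intermediate field with `[N : U] = q^m`. Let `𝔭_F` be a prime of `F`,
unramified over the prime `𝔭_U` of `U` below it, and let `σ` be the Frobenius automorphism
of `𝔭_F`, i.e. a generator of the decomposition group of `𝔭_F` over `U`. If `σ` is not a
`q`-th power in `Gal(F/U)`, then there is exactly one prime of `N` above `𝔭_U`. -/
theorem not_split_in_N_of_frobenius_not_qth_power
    (q m : ℕ) (hq : q.Prime) (hm : 1 ≤ m)
    (U N F : Type*) [Field U] [Field N] [Field F]
    [NumberField U] [NumberField N] [NumberField F]
    [Algebra U N] [Algebra N F] [Algebra U F] [IsScalarTower U N F]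
    [IsGalois U F] [IsCyclic (F ≃ₐ[U] F)]
    (hdeg : q ^ m ∣ Module.finrank U F)
    (hN : Module.finrank U N = q ^ m)
    (𝔭F : HeightOneSpectrum (𝓞 F))
    (hunram : Ideal.ramificationIdx'
      (𝔭F.asIdeal.comap (algebraMap (𝓞 U) (𝓞 F))) 𝔭F.asIdeal = 1)
    (σ : F ≃ₐ[U] F)
    (hσfix : Ideal.comap (galRestrict (𝓞 U) U F (𝓞 F) σ) 𝔭F.asIdeal = 𝔭F.asIdeal)
    (hσgen : ∀ τ : F ≃ₐ[U] F,
      Ideal.comap (galRestrict (𝓞 U) U F (𝓞 F) τ) 𝔭F.asIdeal = 𝔭F.asIdeal →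
        τ ∈ Subgroup.zpowers σ)
    (hnotpow : ¬ ∃ τ : F ≃ₐ[U] F, τ ^ q = σ) :
    ∃! w : HeightOneSpectrum (𝓞 N),
      w.asIdeal.comap (algebraMap (𝓞 U) (𝓞 N)) =
        𝔭F.asIdeal.comap (algebraMap (𝓞 U) (𝓞 F)) :=
  not_split_in_N_of_frobenius_not_qth_power_general q m hq U N F hN 𝔭F σ hσfix hnotpow
end

section
/- Let G be a number field, let H be a totally real number field with H/ℚ Galois with cyclic Galois group of 2-power order, let GH be the compositum of G and H inside a fixed algebraic closure of ℚ, and let Ĝ be a field with G ⊆ Ĝ ⊂ GH and [GH : Ĝ] = 2. Suppose GH = Ĝ(√a) for some nonzero a ∈ Ĝ. Then for every field embedding σ : Ĝ → ℝ one has σ(a) > 0. -/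
/-! Extend a real embedding `σ` of `Ĝ` to an embedding `τ` of `GH = Ĝ(√a)` into `ℂ`. Then `τ` is
real on `G`, where it agrees with `σ`, and on the totally real field `H`, hence on their
compositum `GH`. So `τ(√a)` is a nonzero real number whose square is `σ(a)`. -/

theorem RingHom.exists_comp_algebraMap_eq {F K M : Type*} [Field F] [Field K] [Field M]
    [IsAlgClosed M] [Algebra F K] [Algebra.IsAlgebraic F K] (f : F →+* M) :
    ∃ g : K →+* M, g.comp (algebraMap F K) = f :=
  letI : Algebra F M := f.toAlgebra
  ⟨(IsAlgClosed.lift : K →ₐ[F] M), RingHom.ext (IsAlgClosed.lift : K →ₐ[F] M).commutes⟩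

theorem Subfield.apply_mem_of_le_sup {L L' : Type*} [Field L] [Field L'] {A B M : Subfield L}
    (hAM : A ≤ M) (hBM : B ≤ M) (hM : M ≤ A ⊔ B) (τ : M →+* L') {S : Subfield L'}
    (hA : ∀ x (hx : x ∈ A), τ ⟨x, hAM hx⟩ ∈ S) (hB : ∀ x (hx : x ∈ B), τ ⟨x, hBM hx⟩ ∈ S)
    (x : M) : τ x ∈ S := by
  have hle : A ⊔ B ≤ (S.comap τ).map M.subtype :=
    sup_le (fun y hy => ⟨⟨y, hAM hy⟩, hA y hy, rfl⟩) (fun y hy => ⟨⟨y, hBM hy⟩, hB y hy, rfl⟩)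
  obtain ⟨y, hy, hyx⟩ := hle (hM x.2)
  rwa [← Subtype.ext hyx]

theorem Complex.mem_ofRealHom_fieldRange {z : ℂ} : z ∈ ofRealHom.fieldRange ↔ z.im = 0 :=
  ⟨by rintro ⟨t, rfl⟩; exact ofReal_im t, fun h => ⟨z.re, Complex.ext rfl (by simp [h])⟩⟩

theorem generator_of_compositum_square_root_is_totally_positive_general
    (G H Ghat : IntermediateField ℚ ℂ)
    (htotreal : ∀ σ : H →+* ℂ, ∀ x : H, (σ x).im = 0)
    (hGGhat : G ≤ Ghat) (hle : Ghat ≤ G ⊔ H)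
    (a : Ghat) (ha : a ≠ 0) (s : ℂ) (hs : s ^ 2 = algebraMap Ghat ℂ a)
    (hgen : IntermediateField.extendScalars hle =
      IntermediateField.adjoin Ghat ({s} : Set ℂ)) :
    ∀ σ : Ghat →+* ℝ, 0 < σ a := by
  intro σ
  set K := IntermediateField.extendScalars hle
  have hs_int : IsIntegral Ghat s := .of_pow two_pos (hs ▸ isIntegral_algebraMap)
  have : Algebra.IsAlgebraic Ghat K := hgen ▸ IntermediateField.isAlgebraic_adjoin_simple hs_int
  obtain ⟨τ, hτ⟩ := (Complex.ofRealHom.comp σ).exists_comp_algebraMap_eq (K := K)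
  have hGK : G.toSubfield ≤ K.toSubfield := fun x hx => hle (hGGhat hx)
  have hHK : H.toSubfield ≤ K.toSubfield := fun x hx => le_sup_right (a := G) hx
  have hτ_real : ∀ x : K, τ x ∈ Complex.ofRealHom.fieldRange :=
    Subfield.apply_mem_of_le_sup hGK hHK
      (by rw [IntermediateField.extendScalars_toSubfield, ← IntermediateField.sup_toSubfield])
      τ (fun x hx => ⟨σ ⟨x, hGGhat hx⟩, (RingHom.congr_fun hτ ⟨x, hGGhat hx⟩).symm⟩)
      (fun x hx => Complex.mem_ofRealHom_fieldRange.mpr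
        (htotreal (τ.comp (Subfield.inclusion hHK)) ⟨x, hx⟩))
  have hs_K : s ∈ K := hgen ▸ IntermediateField.mem_adjoin_simple_self Ghat s
  obtain ⟨t, ht⟩ := hτ_real ⟨s, hs_K⟩
  have ht_sq : t ^ 2 = σ a := Complex.ofReal_injective <|
    calc ((t ^ 2 : ℝ) : ℂ) = τ (⟨s, hs_K⟩ ^ 2) := by rw [map_pow, ← ht]; push_cast; rfl
      _ = τ (algebraMap Ghat K a) := congrArg τ (Subtype.ext hs)
      _ = σ a := RingHom.congr_fun hτ a
  have ht_ne : t ≠ 0 := by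
    rintro rfl; exact ha (σ.injective (by simpa using ht_sq.symm))
  exact ht_sq ▸ sq_pos_of_ne_zero ht_ne

/-- Lemma: let `H` be a totally real cyclic extension of `ℚ` of `2`-power degree, `G` a number
field, and `Ghat` a field with `G ⊆ Ghat ⊂ GH` and `[GH : Ghat] = 2` (all inside `ℂ`).
If `GH = Ghat(√a)` for some nonzero `a ∈ Ghat`, then `σ(a) > 0` for every real embedding
`σ : Ghat →+* ℝ`. -/
theorem generator_of_compositum_square_root_is_totally_positive
    (G H Ghat : IntermediateField ℚ ℂ)
    [FiniteDimensional ℚ G] [FiniteDimensional ℚ H] [FiniteDimensional ℚ Ghat]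
    [IsGalois ℚ H] [IsCyclic (H ≃ₐ[ℚ] H)] (r : ℕ)
    (hdegH : Module.finrank ℚ H = 2 ^ r)
    (htotreal : ∀ σ : H →+* ℂ, ∀ x : H, (σ x).im = 0)
    (hGGhat : G ≤ Ghat) (hle : Ghat ≤ G ⊔ H)
    (hdeg2 : Module.finrank Ghat (IntermediateField.extendScalars hle) = 2)
    (a : Ghat) (ha : a ≠ 0) (s : ℂ) (hs : s ^ 2 = algebraMap Ghat ℂ a)
    (hgen : IntermediateField.extendScalars hle =
      IntermediateField.adjoin Ghat ({s} : Set ℂ)) :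
    ∀ σ : Ghat →+* ℝ, 0 < σ a :=
  generator_of_compositum_square_root_is_totally_positive_general G H Ghat htotreal hGGhat hle a ha
    s hs hgen
end

section
/- Let q be a rational prime, let K_∞ be an infinite algebraic extension of ℚ, let G ⊆ K_∞ be a number field, and fix a field path from G to K_∞, i.e. an increasing chain G = M_0 ⊆ M_1 ⊆ M_2 ⊆ ⋯ of number fields whose union is K_∞. Let 𝔭_G be a prime of G. Then 𝔭_G is q-bounded in K_∞ if and only if there exists a q-bounded path through the tree of factors of 𝔭_G along this field path, i.e. a sequence of primes 𝔭_{M_0} = 𝔭_G, 𝔭_{M_1}, 𝔭_{M_2}, … with 𝔭_{M_{j+1}} ∩ M_j = 𝔭_{M_j} for all j, and an index i such that ord_q(d(𝔭_{M_j}/𝔭_G)) = ord_q(d(𝔭_{M_i}/𝔭_G)) for all j ≥ i. -/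
/-!
Local degrees are multiplicative in towers, so along a chain of primes the `q`-adic order of
`d(𝔭/𝔭_G)` is additive and can only grow.

If `𝔭_G` is `q`-bounded, a witness `M ⊇ G` bounds it: every number field `K ⊇ G` has a prime
above `𝔭_G` whose `q`-order is at most the largest `q`-order `C` over the finitely many primes of
`M` above `𝔭_G` (go up to `M ⊔ K`, where some prime has local degree over `M` prime to `q`, and
restrict to `K`). The primes of `M_j` above `𝔭_G` of `q`-order at most `C` then form finite
nonempty sets stable under restriction, and Kőnig's lemma threads a path through them whose
`q`-orders are monotone and bounded, hence eventually constant.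

Conversely, if the `q`-order stabilises from `M_i` on, a witness `K ⊇ M_i` of `q`-unboundedness
lies in some `M_j` with `j ≥ i`, and the prime of `K` below the path would raise the `q`-order
at level `j`.
-/

open NumberField

section Defs

variable {Kinf : Type*} [Field Kinf] [Algebra ℚ Kinf]

/-- The ring homomorphism between rings of integers induced by an inclusion of
intermediate fields. -/
noncomputable def oMap {E F : IntermediateField ℚ Kinf} (h : E ≤ F) :
    𝓞 E →+* 𝓞 F :=
  RingOfIntegers.mapRingHom (IntermediateField.inclusion h)

/-- `P` (a prime of `F`) lies above `p` (a prime of `E`). -/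
def LiesAbove {E F : IntermediateField ℚ Kinf} (h : E ≤ F)
    (P : Ideal (𝓞 F)) (p : Ideal (𝓞 E)) : Prop :=
  Ideal.comap (oMap h) P = p

/-- `p` is a (nonzero) prime of the ring of integers of `E`. -/
def IsPrimeOf (E : IntermediateField ℚ Kinf) (p : Ideal (𝓞 E)) : Prop :=
  p.IsPrime ∧ p ≠ ⊥

/-- The local degree `d(P/p) = e(P/p)·f(P/p)`. -/
noncomputable def locDeg {E F : IntermediateField ℚ Kinf} (h : E ≤ F)
    (p : Ideal (𝓞 E)) (P : Ideal (𝓞 F)) : ℕ :=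
  letI : Algebra (𝓞 E) (𝓞 F) := (oMap h).toAlgebra
  Ideal.ramificationIdx' p P * Ideal.inertiaDeg' p P

/-- The prime `pG` of the number field `G ⊆ Kinf` is `q`-unbounded in `Kinf`: for every number
field `M` with `G ⊆ M ⊆ Kinf` there is a number field `K` with `M ⊆ K ⊆ Kinf` such that `q`
divides the local degree `d(pK/pM)` for every prime `pM` of `M` above `pG` and every prime
`pK` of `K` above `pM`. -/
def QUnbounded (q : ℕ) (G : IntermediateField ℚ Kinf) (pG : Ideal (𝓞 G)) : Prop :=
  ∀ M : IntermediateField ℚ Kinf, ∀ hGM : G ≤ M, FiniteDimensional ℚ M →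
    ∃ (K : IntermediateField ℚ Kinf) (hMK : M ≤ K), FiniteDimensional ℚ K ∧
      ∀ pM : Ideal (𝓞 M), IsPrimeOf M pM → LiesAbove hGM pM pG →
        ∀ pK : Ideal (𝓞 K), IsPrimeOf K pK → LiesAbove hMK pK pM →
          q ∣ locDeg hMK pM pK

end Defs

theorem IntermediateField.exists_le_of_le_iSup_of_directed {F E : Type*} [Field F] [Field E]
    [Algebra F E] {ι : Type*} [Nonempty ι] {M : ι → IntermediateField F E}
    (hM : Directed (· ≤ ·) M) {K : IntermediateField F E} [FiniteDimensional F K]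
    (hK : K ≤ ⨆ i, M i) : ∃ i, K ≤ M i := by
  obtain ⟨t, ht, rfl⟩ := IntermediateField.fg_def.mp
    (IntermediateField.essFiniteType_iff.mp (inferInstance : Algebra.EssFiniteType F K))
  simpa using (CompleteLattice.isCompactElement_iff_le_of_directed_sSup_le _ _).mp
    (IntermediateField.adjoin_finite_isCompactElement ht) (Set.range M) (Set.range_nonempty M)
    hM.directedOn_range (by rwa [sSup_range])

theorem Nat.exists_forall_ge_eq_of_monotone_of_le {a : ℕ → ℕ} (ha : Monotone a) {C : ℕ}
    (hC : ∀ j, a j ≤ C) : ∃ i, ∀ j, i ≤ j → a j = a i := by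
  have hbdd : BddAbove (Set.range a) := ⟨C, Set.forall_mem_range.mpr hC⟩
  obtain ⟨i, hi⟩ := Nat.sSup_mem (Set.range_nonempty a) hbdd
  exact ⟨i, fun j hij => le_antisymm (hi ▸ le_csSup hbdd ⟨j, rfl⟩) (ha hij)⟩

section FieldPath

variable {Kinf : Type*} [Field Kinf] [Algebra ℚ Kinf]

/- `NumberField` asks for finite dimensionality over `DivisionRing.toRatAlgebra`, which agrees with
the intermediate-field `ℚ`-structure only up to `Subsingleton.elim`. -/
instance numberField_of_finiteDimensional (E : IntermediateField ℚ Kinf)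
    [FiniteDimensional ℚ E] : NumberField E where
  to_finiteDimensional := by convert ‹FiniteDimensional ℚ E›; exact Subsingleton.elim _ _

theorem oMap_injective {E F : IntermediateField ℚ Kinf} (h : E ≤ F) :
    Function.Injective (oMap h) :=
  fun _ _ hxy => RingOfIntegers.ext (Subtype.ext (congrArg (fun z : 𝓞 F => ((z : F) : Kinf)) hxy))

theorem oMap_refl {E : IntermediateField ℚ Kinf} (h : E ≤ E) : oMap h = RingHom.id (𝓞 E) :=
  rfl

theorem oMap_comp {E F L : IntermediateField ℚ Kinf} (h₁ : E ≤ F) (h₂ : F ≤ L) :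
    (oMap h₂).comp (oMap h₁) = oMap (h₁.trans h₂) :=
  rfl

theorem map_oMap_ne_bot {E F : IntermediateField ℚ Kinf} (h : E ≤ F) {p : Ideal (𝓞 E)}
    (hp : p ≠ ⊥) : p.map (oMap h) ≠ ⊥ := by
  rwa [Ne, Ideal.map_eq_bot_iff_of_injective (oMap_injective h)]

theorem module_finite_oMap {E F : IntermediateField ℚ Kinf} (h : E ≤ F) [FiniteDimensional ℚ F] :
    letI := (oMap h).toAlgebra
    Module.Finite (𝓞 E) (𝓞 F) :=
  let _ := (oMap h).toAlgebra
  have : IsScalarTower ℤ (𝓞 E) (𝓞 F) := IsScalarTower.of_algebraMap_eq' (Subsingleton.elim _ _)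
  Module.Finite.of_restrictScalars_finite ℤ (𝓞 E) (𝓞 F)

theorem liesAbove_self_iff {E : IntermediateField ℚ Kinf} (h : E ≤ E) {P p : Ideal (𝓞 E)} :
    LiesAbove h P p ↔ P = p := by
  rw [LiesAbove, oMap_refl, Ideal.comap_id]

theorem LiesAbove.trans {E F L : IntermediateField ℚ Kinf} {h₁ : E ≤ F} {h₂ : F ≤ L}
    {p : Ideal (𝓞 E)} {P : Ideal (𝓞 F)} {Q : Ideal (𝓞 L)}
    (hPp : LiesAbove h₁ P p) (hQP : LiesAbove h₂ Q P) : LiesAbove (h₁.trans h₂) Q p := by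
  rw [LiesAbove, ← oMap_comp h₁ h₂, ← Ideal.comap_comap, hQP, hPp]

theorem liesAbove_comap_iff {E F L : IntermediateField ℚ Kinf} (h₁ : E ≤ F) (h₂ : F ≤ L)
    {p : Ideal (𝓞 E)} {Q : Ideal (𝓞 L)} :
    LiesAbove h₁ (Q.comap (oMap h₂)) p ↔ LiesAbove (h₁.trans h₂) Q p := by
  rw [LiesAbove, LiesAbove, Ideal.comap_comap, oMap_comp]

theorem liesAbove_of_forall_liesAbove_succ {M : ℕ → IntermediateField ℚ Kinf} (hmono : Monotone M)
    {P : (j : ℕ) → Ideal (𝓞 (M j))} (hP : ∀ j, LiesAbove (hmono (Nat.le_succ j)) (P (j + 1)) (P j))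
    ⦃i j : ℕ⦄ (hij : i ≤ j) : LiesAbove (hmono hij) (P j) (P i) := by
  induction j, hij using Nat.le_induction with
  | base => exact (liesAbove_self_iff _).mpr rfl
  | succ n _ ih => exact ih.trans (hP n)

theorem IsPrimeOf.isMaximal {E : IntermediateField ℚ Kinf} [FiniteDimensional ℚ E]
    {p : Ideal (𝓞 E)} (hp : IsPrimeOf E p) : p.IsMaximal :=
  Ring.DimensionLEOne.maximalOfPrime hp.2 hp.1

theorem IsPrimeOf.comap {E F : IntermediateField ℚ Kinf} (h : E ≤ F) [FiniteDimensional ℚ F]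
    {P : Ideal (𝓞 F)} (hP : IsPrimeOf F P) : IsPrimeOf E (P.comap (oMap h)) := by
  let _ := (oMap h).toAlgebra
  have := module_finite_oMap h
  have := hP.1
  exact ⟨Ideal.IsPrime.comap _, fun hbot => hP.2 (Ideal.eq_bot_of_comap_eq_bot hbot)⟩

theorem finite_setOf_isPrimeOf_liesAbove {E F : IntermediateField ℚ Kinf} (h : E ≤ F)
    [FiniteDimensional ℚ F] {p : Ideal (𝓞 E)} (hp : p ≠ ⊥) :
    {P : Ideal (𝓞 F) | IsPrimeOf F P ∧ LiesAbove h P p}.Finite := by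
  refine ((Ideal.finite_factors (map_oMap_ne_bot h hp)).image fun v => v.asIdeal).subset ?_
  rintro P ⟨⟨hPprime, hPne⟩, hPp⟩
  exact ⟨⟨P, hPprime, hPne⟩, Ideal.dvd_iff_le.mpr (Ideal.map_le_iff_le_comap.mpr hPp.ge), rfl⟩

theorem locDeg_ne_zero {E F : IntermediateField ℚ Kinf} (h : E ≤ F) [FiniteDimensional ℚ F]
    {p : Ideal (𝓞 E)} {P : Ideal (𝓞 F)} (hp : p ≠ ⊥) (hP : IsPrimeOf F P)
    (hPp : LiesAbove h P p) : locDeg h p P ≠ 0 := by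
  let _ := (oMap h).toAlgebra
  have := module_finite_oMap h
  have := hP.1
  have : P.LiesOver p := ⟨hPp.symm⟩
  exact mul_ne_zero
    (Ideal.IsDedekindDomain.ramificationIdx'_ne_zero (map_oMap_ne_bot h hp) hP.1
      (Ideal.map_le_iff_le_comap.mpr hPp.ge))
    (Ideal.inertiaDeg'_pos' p P).ne'

theorem locDeg_trans {E F L : IntermediateField ℚ Kinf} [FiniteDimensional ℚ E]
    [FiniteDimensional ℚ F] [FiniteDimensional ℚ L] {p : Ideal (𝓞 E)} {P : Ideal (𝓞 F)}
    {Q : Ideal (𝓞 L)} (h₁ : E ≤ F) (h₂ : F ≤ L) (hp : IsPrimeOf E p) (hP : IsPrimeOf F P)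
    (hQ : IsPrimeOf L Q) (hPp : LiesAbove h₁ P p) (hQP : LiesAbove h₂ Q P) :
    locDeg (h₁.trans h₂) p Q = locDeg h₁ p P * locDeg h₂ P Q := by
  let _ := (oMap h₁).toAlgebra
  let _ := (oMap h₂).toAlgebra
  let _ := (oMap (h₁.trans h₂)).toAlgebra
  have : IsScalarTower (𝓞 E) (𝓞 F) (𝓞 L) := IsScalarTower.of_algebraMap_eq fun _ => rfl
  have := hp.isMaximal
  have := hP.isMaximal
  have := hQ.1
  have : P.LiesOver p := ⟨hPp.symm⟩
  have : Q.LiesOver P := ⟨hQP.symm⟩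
  have he := Ideal.ramificationIdx'_algebra_tower (p := p) (map_oMap_ne_bot h₂ hP.2)
    (map_oMap_ne_bot (h₁.trans h₂) hp.2)
    (Ideal.map_le_iff_le_comap.mpr hQP.ge)
  have hf := Ideal.inertiaDeg'_algebra_tower p P Q
  change Ideal.ramificationIdx' p Q * Ideal.inertiaDeg' p Q =
    (Ideal.ramificationIdx' p P * Ideal.inertiaDeg' p P) *
      (Ideal.ramificationIdx' P Q * Ideal.inertiaDeg' P Q)
  rw [he, hf]
  ring


theorem factorization_locDeg_trans {E F L : IntermediateField ℚ Kinf} [FiniteDimensional ℚ E]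
    [FiniteDimensional ℚ F] [FiniteDimensional ℚ L] {p : Ideal (𝓞 E)} {P : Ideal (𝓞 F)}
    {Q : Ideal (𝓞 L)} (h₁ : E ≤ F) (h₂ : F ≤ L) (hp : IsPrimeOf E p) (hP : IsPrimeOf F P)
    (hQ : IsPrimeOf L Q) (hPp : LiesAbove h₁ P p) (hQP : LiesAbove h₂ Q P) (q : ℕ) :
    (locDeg (h₁.trans h₂) p Q).factorization q =
      (locDeg h₁ p P).factorization q + (locDeg h₂ P Q).factorization q := by
  rw [locDeg_trans h₁ h₂ hp hP hQ hPp hQP,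
    Nat.factorization_mul (locDeg_ne_zero h₁ hp.2 hP hPp) (locDeg_ne_zero h₂ hP.2 hQ hQP),
    Finsupp.add_apply]

theorem factorization_locDeg_le_of_liesAbove {E F L : IntermediateField ℚ Kinf}
    [FiniteDimensional ℚ E] [FiniteDimensional ℚ F] [FiniteDimensional ℚ L] {p : Ideal (𝓞 E)}
    {P : Ideal (𝓞 F)} {Q : Ideal (𝓞 L)} (h₁ : E ≤ F) (h₂ : F ≤ L) (hp : IsPrimeOf E p)
    (hP : IsPrimeOf F P) (hQ : IsPrimeOf L Q) (hPp : LiesAbove h₁ P p) (hQP : LiesAbove h₂ Q P)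
    (q : ℕ) : (locDeg h₁ p P).factorization q ≤ (locDeg (h₁.trans h₂) p Q).factorization q := by
  rw [factorization_locDeg_trans h₁ h₂ hp hP hQ hPp hQP]
  exact Nat.le_add_right _ _

theorem factorization_locDeg_lt_of_dvd {E F L : IntermediateField ℚ Kinf}
    [FiniteDimensional ℚ E] [FiniteDimensional ℚ F] [FiniteDimensional ℚ L] {p : Ideal (𝓞 E)}
    {P : Ideal (𝓞 F)} {Q : Ideal (𝓞 L)} {q : ℕ} (hq : q.Prime) (h₁ : E ≤ F) (h₂ : F ≤ L)
    (hp : IsPrimeOf E p) (hP : IsPrimeOf F P) (hQ : IsPrimeOf L Q) (hPp : LiesAbove h₁ P p)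
    (hQP : LiesAbove h₂ Q P) (hdvd : q ∣ locDeg h₂ P Q) :
    (locDeg h₁ p P).factorization q < (locDeg (h₁.trans h₂) p Q).factorization q := by
  rw [factorization_locDeg_trans h₁ h₂ hp hP hQ hPp hQP]
  exact Nat.lt_add_of_pos_right (hq.factorization_pos_of_dvd (locDeg_ne_zero h₂ hP.2 hQ hQP) hdvd)

def boundedPrimesAbove {E F : IntermediateField ℚ Kinf} (h : E ≤ F) (p : Ideal (𝓞 E))
    (q C : ℕ) : Set (Ideal (𝓞 F)) :=
  {P | IsPrimeOf F P ∧ LiesAbove h P p ∧ (locDeg h p P).factorization q ≤ C}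

theorem finite_boundedPrimesAbove {E F : IntermediateField ℚ Kinf} (h : E ≤ F)
    [FiniteDimensional ℚ F] {p : Ideal (𝓞 E)} (hp : p ≠ ⊥) (q C : ℕ) :
    (boundedPrimesAbove h p q C).Finite :=
  (finite_setOf_isPrimeOf_liesAbove h hp).subset fun _ hP => ⟨hP.1, hP.2.1⟩

theorem comap_mem_boundedPrimesAbove {E F L : IntermediateField ℚ Kinf} [FiniteDimensional ℚ E]
    [FiniteDimensional ℚ F] [FiniteDimensional ℚ L] {p : Ideal (𝓞 E)} (hp : IsPrimeOf E p)
    (h₁ : E ≤ F) (h₂ : F ≤ L) {q C : ℕ} {Q : Ideal (𝓞 L)}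
    (hQ : Q ∈ boundedPrimesAbove (h₁.trans h₂) p q C) :
    Q.comap (oMap h₂) ∈ boundedPrimesAbove h₁ p q C := by
  obtain ⟨hQprime, hQp, hQC⟩ := hQ
  have hPprime := hQprime.comap h₂
  have hPp := (liesAbove_comap_iff h₁ h₂).mpr hQp
  exact ⟨hPprime, hPp,
    (factorization_locDeg_le_of_liesAbove h₁ h₂ hp hPprime hQprime hPp rfl q).trans hQC⟩

theorem exists_boundedPrimesAbove_nonempty_of_not_qUnbounded {q : ℕ}
    {G : IntermediateField ℚ Kinf} [FiniteDimensional ℚ G] {pG : Ideal (𝓞 G)}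
    (hpG : IsPrimeOf G pG) (h : ¬ QUnbounded q G pG) :
    ∃ C, ∀ (K : IntermediateField ℚ Kinf) (hGK : G ≤ K) [FiniteDimensional ℚ K],
      (boundedPrimesAbove hGK pG q C).Nonempty := by
  simp only [QUnbounded, not_forall, not_exists, not_and] at h
  obtain ⟨M, hGM, hM, hcoprime⟩ := h
  obtain ⟨C, hC⟩ := ((finite_setOf_isPrimeOf_liesAbove hGM hpG.2).image
    fun pM => (locDeg hGM pG pM).factorization q).bddAbove
  refine ⟨C, fun K hGK _ => ?_⟩
  have hML : M ≤ M ⊔ K := le_sup_left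
  have hKL : K ≤ M ⊔ K := le_sup_right
  obtain ⟨pM, hpM, hpMG, pL, hpL, hpLM, hndvd⟩ := hcoprime (M ⊔ K) hML inferInstance
  have hpLG : LiesAbove (hGK.trans hKL) pL pG := hpMG.trans hpLM
  have hPprime := hpL.comap hKL
  have hPG := (liesAbove_comap_iff hGK hKL).mpr hpLG
  refine ⟨pL.comap (oMap hKL), hPprime, hPG, ?_⟩
  calc (locDeg hGK pG (pL.comap (oMap hKL))).factorization q
      ≤ (locDeg (hGK.trans hKL) pG pL).factorization q :=
        factorization_locDeg_le_of_liesAbove hGK hKL hpG hPprime hpL hPG rfl q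
    _ = (locDeg hGM pG pM).factorization q + (locDeg hML pM pL).factorization q :=
        factorization_locDeg_trans hGM hML hpG hpM hpL hpMG hpLM q
    _ ≤ C := by
        rw [Nat.factorization_eq_zero_of_not_dvd hndvd, add_zero]
        exact hC ⟨pM, ⟨hpM, hpMG⟩, rfl⟩

def IsQBoundedPath (q : ℕ) {M : ℕ → IntermediateField ℚ Kinf} (hmono : Monotone M)
    (pG : Ideal (𝓞 (M 0))) (P : (j : ℕ) → Ideal (𝓞 (M j))) : Prop :=
  P 0 = pG ∧
    (∀ j, IsPrimeOf (M j) (P j)) ∧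
    (∀ j, LiesAbove (hmono (Nat.le_succ j)) (P (j + 1)) (P j)) ∧
    ∃ i, ∀ j, i ≤ j →
      (locDeg (hmono (Nat.zero_le j)) pG (P j)).factorization q =
        (locDeg (hmono (Nat.zero_le i)) pG (P i)).factorization q

section Path

variable {M : ℕ → IntermediateField ℚ Kinf} (hmono : Monotone M) [∀ j, FiniteDimensional ℚ (M j)]

theorem exists_compatible_seq_mem_boundedPrimesAbove {pG : Ideal (𝓞 (M 0))}
    (hpG : IsPrimeOf (M 0) pG) {q C : ℕ}
    (hC : ∀ j, (boundedPrimesAbove (hmono (Nat.zero_le j)) pG q C).Nonempty) :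
    ∃ P : (j : ℕ) → Ideal (𝓞 (M j)),
      (∀ j, P j ∈ boundedPrimesAbove (hmono (Nat.zero_le j)) pG q C) ∧
      ∀ ⦃i j⦄ (hij : i ≤ j), LiesAbove (hmono hij) (P j) (P i) := by
  have (j : ℕ) : Finite (boundedPrimesAbove (hmono (Nat.zero_le j)) pG q C) :=
    (finite_boundedPrimesAbove _ hpG.2 q C).to_subtype
  have (j : ℕ) : Nonempty (boundedPrimesAbove (hmono (Nat.zero_le j)) pG q C) := (hC j).to_subtype
  obtain ⟨P, hP⟩ := exists_seq_forall_proj_of_forall_finite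
    (α := fun j => boundedPrimesAbove (hmono (Nat.zero_le j)) pG q C)
    (fun hij P => ⟨P.1.comap (oMap (hmono hij)),
      comap_mem_boundedPrimesAbove hpG (hmono (Nat.zero_le _)) (hmono hij) P.2⟩)
    (fun _ P => Subtype.ext (by simp only [oMap_refl, Ideal.comap_id]))
    (fun _ _ _ hij hjk P => Subtype.ext (by simp only [Ideal.comap_comap, oMap_comp]))
    (fun _ _ => Set.toFinite _)
  exact ⟨fun j => (P j).1, fun j => (P j).2, fun _ _ hij => congrArg Subtype.val (hP hij)⟩

theorem exists_isQBoundedPath_of_not_qUnbounded {q : ℕ} {pG : Ideal (𝓞 (M 0))}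
    (hpG : IsPrimeOf (M 0) pG) (h : ¬ QUnbounded q (M 0) pG) :
    ∃ P, IsQBoundedPath q hmono pG P := by
  obtain ⟨C, hC⟩ := exists_boundedPrimesAbove_nonempty_of_not_qUnbounded hpG h
  obtain ⟨P, hPC, hPP⟩ := exists_compatible_seq_mem_boundedPrimesAbove hmono hpG
    fun j => hC (M j) (hmono (Nat.zero_le j))
  have hord : Monotone fun j => (locDeg (hmono (Nat.zero_le j)) pG (P j)).factorization q :=
    fun i j hij => factorization_locDeg_le_of_liesAbove (hmono (Nat.zero_le i)) (hmono hij) hpG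
      (hPC i).1 (hPC j).1 (hPC i).2.1 (hPP hij) q
  exact ⟨P, (liesAbove_self_iff _).mp (hPC 0).2.1, fun j => (hPC j).1, fun j => hPP (Nat.le_succ j),
    Nat.exists_forall_ge_eq_of_monotone_of_le hord fun j => (hPC j).2.2⟩

theorem IsQBoundedPath.not_qUnbounded {q : ℕ} (hq : q.Prime) (hunion : ⨆ j, M j = ⊤)
    {pG : Ideal (𝓞 (M 0))} {P : (j : ℕ) → Ideal (𝓞 (M j))} (hP : IsQBoundedPath q hmono pG P) :
    ¬ QUnbounded q (M 0) pG := by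
  obtain ⟨rfl, hprime, hsucc, i, hstab⟩ := hP
  have hpath := liesAbove_of_forall_liesAbove_succ hmono hsucc
  intro hU
  obtain ⟨K, hMK, _, hdvd⟩ := hU (M i) (hmono (Nat.zero_le i)) inferInstance
  obtain ⟨j, hKj⟩ := IntermediateField.exists_le_of_le_iSup_of_directed hmono.directed_le
    (hunion ▸ le_top : K ≤ ⨆ j, M j)
  have hik : i ≤ max i j := le_max_left i j
  have hKk : K ≤ M (max i j) := hKj.trans (hmono (le_max_right i j))
  have hpK := (hprime (max i j)).comap hKk
  have hpKi := (liesAbove_comap_iff hMK hKk).mpr (hpath hik)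
  have hlt := factorization_locDeg_lt_of_dvd hq (hmono (Nat.zero_le i)) hMK (hprime 0) (hprime i)
    hpK (hpath (Nat.zero_le i)) hpKi
    (hdvd (P i) (hprime i) (hpath (Nat.zero_le i)) _ hpK hpKi)
  have hle := factorization_locDeg_le_of_liesAbove ((hmono (Nat.zero_le i)).trans hMK) hKk
    (hprime 0) hpK (hprime (max i j)) ((hpath (Nat.zero_le i)).trans hpKi) rfl q
  have := hstab (max i j) hik
  omega

end Path

end FieldPath

theorem q_bounded_iff_exists_q_bounded_path_general
    (Kinf : Type*) [Field Kinf] [Algebra ℚ Kinf]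
    (q : ℕ) (hq : q.Prime)
    (M : ℕ → IntermediateField ℚ Kinf) (hmono : Monotone M)
    (hfd : ∀ j, FiniteDimensional ℚ (M j)) (hunion : (⨆ j, M j) = ⊤)
    (pG : Ideal (𝓞 (M 0))) (hpG : IsPrimeOf (M 0) pG) :
    ¬ QUnbounded q (M 0) pG ↔
      ∃ P : (j : ℕ) → Ideal (𝓞 (M j)),
        P 0 = pG ∧
        (∀ j, IsPrimeOf (M j) (P j)) ∧
        (∀ j, LiesAbove (hmono (Nat.le_succ j)) (P (j + 1)) (P j)) ∧
        ∃ i, ∀ j, i ≤ j →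
          (locDeg (hmono (Nat.zero_le j)) pG (P j)).factorization q =
            (locDeg (hmono (Nat.zero_le i)) pG (P i)).factorization q :=
  ⟨exists_isQBoundedPath_of_not_qUnbounded hmono hpG,
    fun ⟨_, hP⟩ => IsQBoundedPath.not_qUnbounded hmono hq hunion hP⟩

/-- Lemma: fix a field path `M 0 ⊆ M 1 ⊆ ⋯` from the number field `G = M 0` to the infinite
algebraic extension `Kinf` of `ℚ` (an increasing chain of number fields with union `Kinf`).
A prime `pG` of `G` is `q`-bounded in `Kinf` (i.e. not `q`-unbounded) if and only if there is
a `q`-bounded path through the tree of factors of `pG` along this field path: a compatible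
sequence of primes `P j` of `M j` starting at `pG` whose local degrees over `pG` have
eventually constant `q`-adic order. -/
theorem q_bounded_iff_exists_q_bounded_path
    (Kinf : Type*) [Field Kinf] [Algebra ℚ Kinf] [Algebra.IsAlgebraic ℚ Kinf]
    (hinf : ¬ FiniteDimensional ℚ Kinf)
    (q : ℕ) (hq : q.Prime)
    (M : ℕ → IntermediateField ℚ Kinf) (hmono : Monotone M)
    (hfd : ∀ j, FiniteDimensional ℚ (M j)) (hunion : (⨆ j, M j) = ⊤)
    (pG : Ideal (𝓞 (M 0))) (hpG : IsPrimeOf (M 0) pG) :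
    ¬ QUnbounded q (M 0) pG ↔
      ∃ P : (j : ℕ) → Ideal (𝓞 (M j)),
        P 0 = pG ∧
        (∀ j, IsPrimeOf (M j) (P j)) ∧
        (∀ j, LiesAbove (hmono (Nat.le_succ j)) (P (j + 1)) (P j)) ∧
        ∃ i, ∀ j, i ≤ j →
          (locDeg (hmono (Nat.zero_le j)) pG (P j)).factorization q =
            (locDeg (hmono (Nat.zero_le i)) pG (P i)).factorization q :=
  q_bounded_iff_exists_q_bounded_path_general Kinf q hq M hmono hfd hunion pG hpG
end

section
/- Let N/K be an extension of number fields of degree n, let 𝔔 be a prime of K, and let 𝔮_1, …, 𝔮_m be all the primes of N lying above 𝔔. Let u ∈ N satisfy ord_{𝔮_j}(u) ≥ 0 for all j = 1, …, m. Suppose there exists a sequence of pairs (k_i, y_i), i = 1, 2, 3, …, with k_i positive integers, k_{i+1} > k_i, and y_i ∈ K with ord_{𝔮_j}(y_i) ≥ 0 for all i and j, such that ord_{𝔮_j}(u − y_i) > k_i for all i and j. Then u ∈ K. -/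
open IsDedekindDomain NumberField

/-
Pass to the Galois closure `L` of `N/K`. For every `K`-embedding `f : N → L` and every prime `W`
of `L` above `𝔔`, the `W`-adic valuation of `f (u - y_i)` is at most the valuation of `u - y_i` at
the prime of `N` below `W`: the latter is `≤ 1` and gets raised to the ramification index. Hence
any two conjugates `f u` and `g u` are `W`-adically closer than `exp (-k_i)` for every `i`, so they
coincide, and an element fixed by `Gal(L/K)` lies in `K`.
-/
open WithZero IsDedekindDomain.HeightOneSpectrum

theorem IsDedekindDomain.HeightOneSpectrum.valuation_algebraMap_le_of_liesOver
    {A K : Type*} (L : Type*) {B : Type*}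
    [CommRing A] [IsDedekindDomain A] [CommRing B] [IsDedekindDomain B] [Algebra A B]
    [Module.IsTorsionFree A B] [Field K] [Field L] [Algebra K L]
    [Algebra A K] [IsFractionRing A K] [Algebra A L] [IsScalarTower A K L]
    [Algebra B L] [IsFractionRing B L] [IsScalarTower A B L]
    (v : HeightOneSpectrum A) (w : HeightOneSpectrum B) [w.asIdeal.LiesOver v.asIdeal]
    {x : K} (hx : v.valuation K x ≤ 1) :
    w.valuation L (algebraMap K L x) ≤ v.valuation K x := by
  rw [← valuation_liesOver L v w]
  exact pow_le_of_le_one zero_le hx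
    (Ideal.IsDedekindDomain.ramificationIdx'_ne_zero_of_liesOver w.asIdeal v.ne_bot)

theorem Valuation.eq_zero_of_forall_le_exp_neg {F : Type*} [Field F] (v : Valuation F ℤᵐ⁰)
    {x : F} {k : ℕ → ℕ} (hk : StrictMono k) (hx : ∀ i, v x ≤ exp (-(k i : ℤ))) : x = 0 := by
  by_contra hx0
  obtain ⟨m, hm⟩ : ∃ m, v x = exp m := ⟨_, (exp_log (v.ne_zero_iff.mpr hx0)).symm⟩
  have hle := hx ((-m).toNat + 1)
  rw [hm, exp_le_exp] at hle
  have : (-m).toNat + 1 ≤ k ((-m).toNat + 1) := hk.le_apply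
  omega

section NumberField

variable {K N L : Type*} [Field K] [Field N] [Field L] [NumberField N] [NumberField L]
  [Algebra K N] [Algebra K L]

theorem valuation_algHom_le_of_forall_liesOver (f : N →ₐ[K] L) (𝔔 : HeightOneSpectrum (𝓞 K))
    {x : N} {γ : ℤᵐ⁰} (hγ : γ ≤ 1)
    (hx : ∀ w : HeightOneSpectrum (𝓞 N),
      w.asIdeal.comap (algebraMap (𝓞 K) (𝓞 N)) = 𝔔.asIdeal → w.valuation N x ≤ γ)
    (W : HeightOneSpectrum (𝓞 L)) (hW : W.asIdeal.comap (algebraMap (𝓞 K) (𝓞 L)) = 𝔔.asIdeal) :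
    W.valuation L (f x) ≤ γ := by
  -- Making `f` the structure map lets the ramification comparison reach every `K`-embedding,
  -- in particular every Galois conjugate of a fixed one.
  let : Algebra N L := f.toAlgebra
  have : IsScalarTower K N L := .of_algebraMap_eq fun c => (f.commutes c).symm
  set w := W.under (𝓞 N)
  have hw : w.asIdeal.comap (algebraMap (𝓞 K) (𝓞 N)) = 𝔔.asIdeal := by
    rw [← hW, under_asIdeal, Ideal.under_def, Ideal.comap_comap, ← IsScalarTower.algebraMap_eq]
  have : W.asIdeal.LiesOver w.asIdeal := ⟨rfl⟩
  exact (valuation_algebraMap_le_of_liesOver L w W ((hx w hw).trans hγ)).trans (hx w hw)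

theorem valuation_eq_exp_neg_ordv [NumberField K] (v : HeightOneSpectrum (𝓞 K)) {x : K}
    (hx : x ≠ 0) : v.valuation K x = exp (-ordv v x) := by
  rw [ordv, dif_neg hx, neg_neg, exp, ofAdd_toAdd, coe_unzero]

theorem lt_ordv_iff [NumberField K] (v : HeightOneSpectrum (𝓞 K)) {x : K} (hx : x ≠ 0) (n : ℤ) :
    n < ordv v x ↔ v.valuation K x ≤ exp (-(n + 1)) := by
  rw [valuation_eq_exp_neg_ordv v hx, exp_le_exp]
  omega

end NumberField

theorem mem_range_algebraMap_of_forall_algHom_eq {K N L : Type*} [Field K] [Field N] [Field L]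
    [Algebra K N] [Algebra K L] [Algebra N L] [IsScalarTower K N L] [IsGalois K L]
    [FiniteDimensional K L] {u : N} (h : ∀ f g : N →ₐ[K] L, f u = g u) :
    u ∈ (algebraMap K N).range := by
  let ι := IsScalarTower.toAlgHom K N L
  obtain ⟨c, hc⟩ := (IsGalois.mem_range_algebraMap_iff_fixed (algebraMap N L u)).mpr
    fun σ => h (σ.toAlgHom.comp ι) ι
  exact ⟨c, (algebraMap N L).injective (by rwa [← IsScalarTower.algebraMap_apply])⟩

theorem weak_vertical_method_general
    (K N : Type*) [Field K] [Field N] [NumberField K] [NumberField N]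
    [Algebra K N]
    (𝔔 : HeightOneSpectrum (𝓞 K))
    (u : N)
    (k : ℕ → ℕ) (hkmono : StrictMono k)
    (y : ℕ → K)
    (hclose : ∀ i, ∀ w : HeightOneSpectrum (𝓞 N),
      w.asIdeal.comap (algebraMap (𝓞 K) (𝓞 N)) = 𝔔.asIdeal →
        u - algebraMap K N (y i) = 0 ∨ (k i : ℤ) < ordv w (u - algebraMap K N (y i))) :
    u ∈ (algebraMap K N).range := by
  by_cases hexact : ∃ i, u - algebraMap K N (y i) = 0
  · obtain ⟨i, hi⟩ := hexact
    exact ⟨y i, (sub_eq_zero.mp hi).symm⟩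
  push Not at hexact
  let L := IntermediateField.normalClosure K N (AlgebraicClosure N)
  have : NumberField L := .of_module_finite K L
  have happrox : ∀ (f : N →ₐ[K] L) (W : HeightOneSpectrum (𝓞 L)),
      W.asIdeal.comap (algebraMap (𝓞 K) (𝓞 L)) = 𝔔.asIdeal → ∀ i,
        W.valuation L (f u - algebraMap K L (y i)) ≤ exp (-(k i + 1 : ℤ)) := by
    intro f W hW i
    rw [← f.commutes, ← map_sub]
    refine valuation_algHom_le_of_forall_liesOver f 𝔔 ?_ (fun w hw => ?_) W hW
    · rw [← exp_zero, exp_le_exp]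
      omega
    · exact (lt_ordv_iff w (hexact i) _).mp ((hclose i w hw).resolve_left (hexact i))
  obtain ⟨⟨P, hPprime, hPover⟩⟩ := (inferInstance : Nonempty (𝔔.asIdeal.primesOver (𝓞 L)))
  let W : HeightOneSpectrum (𝓞 L) := ⟨P, hPprime, Ideal.ne_bot_of_liesOver_of_ne_bot 𝔔.ne_bot P⟩
  have hW : W.asIdeal.comap (algebraMap (𝓞 K) (𝓞 L)) = 𝔔.asIdeal := hPover.over.symm
  refine mem_range_algebraMap_of_forall_algHom_eq (L := L) fun f g => sub_eq_zero.mp ?_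
  refine (W.valuation L).eq_zero_of_forall_le_exp_neg hkmono fun i => ?_
  calc W.valuation L (f u - g u)
      = W.valuation L ((f u - algebraMap K L (y i)) - (g u - algebraMap K L (y i))) := by
        rw [sub_sub_sub_cancel_right]
    _ ≤ exp (-(k i + 1 : ℤ)) := (Valuation.map_sub _ _ _).trans <|
        max_le (happrox f W hW i) (happrox g W hW i)
    _ ≤ exp (-(k i : ℤ)) := exp_le_exp.mpr (by omega)

/-- Proposition (the weak vertical method): let `N/K` be an extension of number fields, `𝔔`
a prime of `K`, and `u ∈ N` integral at all primes of `N` above `𝔔`. If there is a sequence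
`(k_i, y_i)` with `k_i` strictly increasing positive integers and `y_i ∈ K` integral at all
primes above `𝔔`, such that `ord_w(u - y_i) > k_i` at every prime `w` of `N` above `𝔔`,
then `u ∈ K`. -/
theorem weak_vertical_method
    (K N : Type*) [Field K] [Field N] [NumberField K] [NumberField N]
    [Algebra K N] [FiniteDimensional K N]
    (𝔔 : HeightOneSpectrum (𝓞 K))
    (u : N)
    (hu : ∀ w : HeightOneSpectrum (𝓞 N),
      w.asIdeal.comap (algebraMap (𝓞 K) (𝓞 N)) = 𝔔.asIdeal → 0 ≤ ordv w u)
    (k : ℕ → ℕ) (hkpos : ∀ i, 1 ≤ k i) (hkmono : StrictMono k)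
    (y : ℕ → K)
    (hy : ∀ i, ∀ w : HeightOneSpectrum (𝓞 N),
      w.asIdeal.comap (algebraMap (𝓞 K) (𝓞 N)) = 𝔔.asIdeal →
        0 ≤ ordv w (algebraMap K N (y i)))
    (hclose : ∀ i, ∀ w : HeightOneSpectrum (𝓞 N),
      w.asIdeal.comap (algebraMap (𝓞 K) (𝓞 N)) = 𝔔.asIdeal →
        u - algebraMap K N (y i) = 0 ∨ (k i : ℤ) < ordv w (u - algebraMap K N (y i))) :
    u ∈ (algebraMap K N).range :=
  weak_vertical_method_general K N 𝔔 u k hkmono y hclose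
end
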